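/- arXiv:1606.07881 — 7 statements merged into one kernel-verified Lean document; each statement's English description precedes it below -/
import Mathlib

section
/- Let G₁ and G₂ be finite simple graphs with G₁ nonempty, such that G₁ ⟶ G₂ but not G₂ ⟶ G₁, and such that it is not the case that G₁ has no edges and G₂ is 2-colorable (i.e. the pair (G₁,G₂) is not homomorphism-equivalent to the gap (K₁,K₂)). Then there exists a finite simple graph H with G₁ ⟶ H, H ⟶ G₂, not H ⟶ G₁, and not G₂ ⟶ H. (Density of the homomorphism order.) -/
/-!
Let `X` be a graph of chromatic number larger than `|V₁| ^ |V₂|` whose odd closed walks all have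
length at least `2 |V₂|` (a shift graph), and take `H = G₁ + G₂ × X` (disjoint union and
categorical product). A homomorphism `H → G₁` would colour `X` by its slices `V₂ → V₁`, and one
of these slices would be a homomorphism `G₂ → G₁`. In a homomorphism `G₂ → H`, the part of `G₂`
sent to `G₂ × X` maps to `X`, hence has no short odd cycles and is bipartite; folding it onto an
edge of `G₁` yields again `G₂ → G₁`. When `G₁` has no edges, `K₂` lies in between instead.
-/

namespace SimpleGraph

variable {U V W : Type*}

@[simps]
def tensorProd (G : SimpleGraph V) (H : SimpleGraph W) : SimpleGraph (V × W) where
  Adj p q := G.Adj p.1 q.1 ∧ H.Adj p.2 q.2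
  symm := ⟨fun _ _ h => ⟨h.1.symm, h.2.symm⟩⟩
  loopless := ⟨fun _ h => h.1.ne rfl⟩

def Hom.tensorProdFst (G : SimpleGraph V) (H : SimpleGraph W) : G.tensorProd H →g G :=
  ⟨Prod.fst, fun h => h.1⟩

def Hom.tensorProdSnd (G : SimpleGraph V) (H : SimpleGraph W) : G.tensorProd H →g H :=
  ⟨Prod.snd, fun h => h.2⟩

def Hom.sumElim {G : SimpleGraph U} {H : SimpleGraph V} {K : SimpleGraph W}
    (f : G →g K) (g : H →g K) : G ⊕g H →g K where
  toFun := Sum.elim f g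
  map_rel' {x y} h := by cases x <;> cases y <;> simp_all [f.map_rel, g.map_rel]

def Hom.ofAdj {G : SimpleGraph V} {u v : V} (h : G.Adj u v) : (⊤ : SimpleGraph (Fin 2)) →g G where
  toFun := ![u, v]
  map_rel' {i j} hij := by fin_cases i <;> fin_cases j <;> simp_all [h.symm]

theorem colorable_of_tensorProd_hom [Finite V] [Finite W] {G : SimpleGraph V} {H : SimpleGraph W}
    {X : SimpleGraph U} (hGH : ¬ Nonempty (G →g H)) (f : G.tensorProd X →g H) :
    X.Colorable (Nat.card (V → W)) := by
  classical
  have := Fintype.ofFinite V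
  have := Fintype.ofFinite W
  let slice (x : U) (v : V) : W := f (v, x)
  have valid {x y : U} (hxy : X.Adj x y) : slice x ≠ slice y := by
    intro hslice
    refine hGH ⟨⟨slice x, fun {u v} huv => ?_⟩⟩
    have := f.map_rel (show (G.tensorProd X).Adj (u, x) (v, y) by simp [huv, hxy])
    rwa [show f (v, y) = slice x v from congrFun hslice.symm v] at this
  simpa [Nat.card_eq_fintype_card] using (Coloring.mk slice valid).colorable

theorem two_colorable_of_forall_odd_loop_length_ge [Finite V] {G : SimpleGraph V}
    (h : ∀ u (w : G.Walk u u), Odd w.length → 2 * Nat.card V ≤ w.length) : G.Colorable 2 := by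
  classical
  have := Fintype.ofFinite V
  let root v := (G.connectedComponentMk v).out
  have reach v : G.Reachable (root v) v :=
    ConnectedComponent.exact (G.connectedComponentMk v).out_eq
  have dist_lt {u v} (huv : G.Reachable u v) : G.dist u v < Nat.card V := by
    obtain ⟨p⟩ := huv
    rw [Nat.card_eq_fintype_card]
    exact (dist_le p.toPath.1).trans_lt p.toPath.2.length_lt
  refine ⟨Coloring.mk (fun v => ⟨G.dist (root v) v % 2, Nat.mod_lt _ two_pos⟩)
    fun {u v} huv hcol => ?_⟩
  have hroot : root v = root u :=
    congrArg Quot.out (ConnectedComponent.connectedComponentMk_eq_of_adj huv).symm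
  obtain ⟨p, hp⟩ := (reach u).exists_walk_length_eq_dist
  obtain ⟨q, hq⟩ := (hroot ▸ reach v).exists_walk_length_eq_dist
  have hparity : G.dist (root u) u % 2 = G.dist (root u) v % 2 := by
    simpa [hroot] using congrArg Fin.val hcol
  have hlong := h _ (p.append (.cons huv q.reverse)) (by
    rw [Walk.length_append, Walk.length_cons, Walk.length_reverse, hp, hq, Nat.odd_iff]; omega)
  have := dist_lt (reach u)
  have := dist_lt (hroot ▸ reach v)
  rw [Walk.length_append, Walk.length_cons, Walk.length_reverse, hp, hq] at hlong
  omega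

section Sum

variable {G : SimpleGraph U} {A : SimpleGraph V} {B : SimpleGraph W}

theorem sum_adj_isRight_eq {x y : V ⊕ W} (h : (A ⊕g B).Adj x y) : x.isRight = y.isRight := by
  cases x <;> cases y <;> simp_all

theorem sum_adj_getLeft {x y : V ⊕ W} (h : (A ⊕g B).Adj x y) (hx : x.isLeft) (hy : y.isLeft) :
    A.Adj (x.getLeft hx) (y.getLeft hy) := by
  obtain ⟨a, rfl⟩ := Sum.isLeft_iff.mp hx
  obtain ⟨b, rfl⟩ := Sum.isLeft_iff.mp hy
  exact h

theorem sum_adj_getRight {x y : V ⊕ W} (h : (A ⊕g B).Adj x y) (hx : x.isRight) (hy : y.isRight) :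
    B.Adj (x.getRight hx) (y.getRight hy) := by
  obtain ⟨a, rfl⟩ := Sum.isRight_iff.mp hx
  obtain ⟨b, rfl⟩ := Sum.isRight_iff.mp hy
  exact h

variable (f : G →g A ⊕g B)

def Hom.restrictRight : G.induce {u | (f u).isRight} →g B where
  toFun u := (f u).getRight u.2
  map_rel' huv := sum_adj_getRight (f.map_rel huv) _ _

def Hom.replaceRight (g : G.induce {u | (f u).isRight} →g A) : G →g A where
  toFun u := if h : (f u).isRight then g ⟨u, h⟩ else (f u).getLeft (by simpa using h)
  map_rel' {u v} huv := by
    have hsum := f.map_rel huv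
    have := sum_adj_isRight_eq hsum
    by_cases hu : (f u).isRight
    · rw [dif_pos hu, dif_pos (this ▸ hu)]
      exact g.map_rel huv
    · rw [dif_neg hu, dif_neg (this ▸ hu)]
      exact sum_adj_getLeft hsum _ _

theorem nonempty_hom_of_hom_sum [Finite U] (f : G →g A ⊕g B)
    (hB : ∀ x (w : B.Walk x x), Odd w.length → 2 * Nat.card U ≤ w.length)
    {a a' : V} (ha : A.Adj a a') : Nonempty (G →g A) := by
  obtain ⟨c⟩ : (G.induce {u | (f u).isRight}).Colorable 2 :=
    two_colorable_of_forall_odd_loop_length_ge fun u w hw => by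
      have := hB _ (w.map f.restrictRight) (by rwa [Walk.length_map])
      rw [Walk.length_map] at this
      exact (Nat.mul_le_mul_left 2 (Finite.card_subtype_le _)).trans this
  exact ⟨f.replaceRight ((Hom.ofAdj ha).comp c)⟩

end Sum

section ShiftGraph

variable {k n : ℕ}

def IsShift (a b : Fin (k + 1) → Fin n) : Prop :=
  ∃ t : Fin (k + 2) → Fin n, StrictMono t ∧ Fin.init t = a ∧ Fin.tail t = b

theorem IsShift.apply_eq {a b : Fin (k + 1) → Fin n} (h : IsShift a b) {i j : Fin (k + 1)}
    (hij : (i : ℕ) = j + 1) : a i = b j := by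
  obtain ⟨t, -, rfl, rfl⟩ := h
  simp only [Fin.init, Fin.tail]
  congr 1
  ext
  simp [hij]

theorem IsShift.of_tail_eq_init {a b : Fin (k + 1) → Fin n} (hb : StrictMono b)
    (h : Fin.tail a = Fin.init b) (h0 : a 0 < b 0) : IsShift a b := by
  refine ⟨Fin.cons (a 0) b, hb.vecCons h0, funext fun i => ?_, Fin.tail_cons _ _⟩
  induction i using Fin.cases with
  | zero => rfl
  | succ j => simpa [Fin.init, Fin.tail, ← Fin.succ_castSucc] using (congrFun h j).symm

/-- An edge of `shiftGraph k n` is a vertex of `shiftGraph (k + 1) n`; colouring a vertex by the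
set of colours of its extensions turns a `c`-colouring of `shiftGraph (k + 1) n` into a
`2 ^ c`-colouring of `shiftGraph k n`, while each step of a walk shifts the tuples by one position,
so that odd closed walks in `shiftGraph k n` have length more than `k / 2`. -/
def shiftGraph (k n : ℕ) : SimpleGraph {a : Fin (k + 1) → Fin n // StrictMono a} :=
  fromRel fun a b => IsShift a.1 b.1

theorem not_colorable_shiftGraph_zero (c : ℕ) : ¬ (shiftGraph 0 (c + 1)).Colorable c := by
  rintro ⟨C⟩
  let φ : (⊤ : SimpleGraph (Fin (c + 1))) →g shiftGraph 0 (c + 1) :=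
    ⟨fun x => ⟨![x], strictMono_vecEmpty⟩, fun {x y} hxy => by
      have shift {x y : Fin (c + 1)} (h : x < y) : IsShift ![x] ![y] :=
        .of_tail_eq_init strictMono_vecEmpty (Subsingleton.elim _ _) h
      refine (fromRel_adj _ _ _).2 ⟨fun h => hxy (congrFun (congrArg Subtype.val h) 0), ?_⟩
      exact (lt_or_gt_of_ne hxy).imp shift shift⟩
  simpa using Fintype.card_le_of_injective _ (Hom.injective_of_top_hom (C.comp φ))

theorem colorable_shiftGraph_of_colorable_succ {c : ℕ} (h : (shiftGraph (k + 1) n).Colorable c) :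
    (shiftGraph k n).Colorable (2 ^ c) := by
  obtain ⟨C⟩ := h
  let D (a : {a : Fin (k + 1) → Fin n // StrictMono a}) : Set (Fin c) :=
    C '' {t | Fin.init t.1 = a.1}
  have key {a a'} (hne : a ≠ a') (h : IsShift a.1 a'.1) : D a ≠ D a' := by
    obtain ⟨t, ht, hta, hta'⟩ := h
    intro hD
    obtain ⟨u, hua', hCu⟩ : C ⟨t, ht⟩ ∈ D a' := hD ▸ ⟨⟨t, ht⟩, hta, rfl⟩
    have htu : Fin.tail t = Fin.init u.1 := hta'.trans hua'.symm
    have h0 : t 0 < u.1 0 := calc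
      t 0 < t 1 := ht Fin.zero_lt_one
      _ = u.1 0 := congrFun htu 0
    have hshift : IsShift t u.1 := .of_tail_eq_init u.2 htu h0
    refine C.valid ((fromRel_adj _ _ _).2 ⟨?_, .inl hshift⟩) hCu.symm
    rintro rfl
    exact hne (Subtype.ext (hta.symm.trans hua'))
  have hcol := (Coloring.mk (G := shiftGraph k n) D fun {a a'} h => by
    obtain ⟨hne, h | h⟩ := (fromRel_adj _ _ _).1 h
    exacts [key hne h, (key hne.symm h).symm]).colorable
  simpa using hcol

theorem exists_not_colorable_shiftGraph (k c : ℕ) : ∃ n, ¬ (shiftGraph k n).Colorable c := by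
  induction k generalizing c with
  | zero => exact ⟨c + 1, not_colorable_shiftGraph_zero c⟩
  | succ k ih =>
    obtain ⟨n, hn⟩ := ih (2 ^ c)
    exact ⟨n, fun h => hn (colorable_shiftGraph_of_colorable_succ h)⟩

theorem exists_apply_eq_of_shiftGraph_walk {a b} (w : (shiftGraph k n).Walk a b) (i : Fin (k + 1))
    (hi : w.length ≤ i) (hik : i + w.length ≤ k) :
    ∃ j : Fin (k + 1), a.1 i = b.1 j ∧ Even (i + j + w.length : ℕ) := by
  induction w generalizing i with
  | nil => exact ⟨i, rfl, by simp⟩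
  | cons h p ih =>
    rw [Walk.length_cons] at hi hik
    rw [Walk.length_cons]
    rcases ((fromRel_adj _ _ _).1 h).2 with h | h
    · obtain ⟨j, hj, heven⟩ := ih ⟨i - 1, by omega⟩ (by simp; omega) (by simp; omega)
      refine ⟨j, (h.apply_eq (by simp; omega)).trans hj, ?_⟩
      simp only [Nat.even_iff] at heven ⊢
      omega
    · obtain ⟨j, hj, heven⟩ := ih ⟨i + 1, by omega⟩ (by simp; omega) (by simp; omega)
      refine ⟨j, (h.apply_eq (by simp)).symm.trans hj, ?_⟩
      simp only [Nat.even_iff] at heven ⊢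
      omega

theorem lt_two_mul_length_of_odd_shiftGraph_loop {a} (w : (shiftGraph k n).Walk a a)
    (hw : Odd w.length) : k < 2 * w.length := by
  by_contra! hk
  obtain ⟨j, hj, heven⟩ :=
    exists_apply_eq_of_shiftGraph_walk w ⟨w.length, by omega⟩ le_rfl (by simp; omega)
  have hj : w.length = j := congrArg Fin.val (a.2.injective hj)
  simp only [Nat.even_iff] at heven
  rw [Nat.odd_iff] at hw
  omega

end ShiftGraph

end SimpleGraph

open SimpleGraph

theorem hom_order_dense_general {V₁ V₂ : Type} [Fintype V₁] [Fintype V₂]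
    (G₁ : SimpleGraph V₁) (G₂ : SimpleGraph V₂)
    (h₁₂ : Nonempty (G₁ →g G₂)) (h₂₁ : ¬ Nonempty (G₂ →g G₁))
    (hgap : ¬ (G₁.edgeSet = ∅ ∧ G₂.Colorable 2)) :
    ∃ (W : Type) (_ : Fintype W) (H : SimpleGraph W),
      Nonempty (G₁ →g H) ∧ Nonempty (H →g G₂) ∧
      ¬ Nonempty (H →g G₁) ∧ ¬ Nonempty (G₂ →g H) := by
  obtain ⟨f⟩ := h₁₂
  by_cases hG₁ : G₁ = ⊥
  · have hG₂ : ¬ G₂.Colorable 2 := fun h => hgap ⟨edgeSet_eq_empty.mpr hG₁, h⟩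
    obtain ⟨a, b, hab⟩ := ne_bot_iff_exists_adj.mp fun h : G₂ = ⊥ =>
      hG₂ ⟨⟨fun _ => 0, fun hadj => by simp [h] at hadj⟩⟩
    subst hG₁
    refine ⟨Fin 2, inferInstance, ⊤, ⟨⟨fun _ => 0, fun h => h.elim⟩⟩, ⟨Hom.ofAdj hab⟩,
      fun ⟨g⟩ => g.map_rel ((top_adj 0 1).mpr zero_ne_one), fun ⟨c⟩ => hG₂ ⟨c⟩⟩
  · obtain ⟨u, v, huv⟩ := ne_bot_iff_exists_adj.mp hG₁
    obtain ⟨n, hX⟩ := exists_not_colorable_shiftGraph (4 * Nat.card V₂) (Nat.card (V₂ → V₁))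
    refine ⟨_, Fintype.ofFinite _, G₁ ⊕g G₂.tensorProd (shiftGraph (4 * Nat.card V₂) n),
      ⟨Embedding.sumInl.toHom⟩, ⟨f.sumElim (Hom.tensorProdFst _ _)⟩, fun ⟨g⟩ => ?_, fun ⟨g⟩ => ?_⟩
    · exact hX (colorable_of_tensorProd_hom h₂₁ (g.comp Embedding.sumInr.toHom))
    · refine h₂₁ (nonempty_hom_of_hom_sum g (fun x w hw => ?_) huv)
      have := lt_two_mul_length_of_odd_shiftGraph_loop (w.map (Hom.tensorProdSnd _ _))
        (by rwa [Walk.length_map])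
      rw [Walk.length_map] at this
      omega

/-- Density of the homomorphism order: every non-gap interval contains an
intermediate graph. -/
theorem hom_order_dense {V₁ V₂ : Type} [Fintype V₁] [Fintype V₂] [Nonempty V₁]
    (G₁ : SimpleGraph V₁) (G₂ : SimpleGraph V₂)
    (h₁₂ : Nonempty (G₁ →g G₂)) (h₂₁ : ¬ Nonempty (G₂ →g G₁))
    (hgap : ¬ (G₁.edgeSet = ∅ ∧ G₂.Colorable 2)) :
    ∃ (W : Type) (_ : Fintype W) (H : SimpleGraph W),
      Nonempty (G₁ →g H) ∧ Nonempty (H →g G₂) ∧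
      ¬ Nonempty (H →g G₁) ∧ ¬ Nonempty (G₂ →g H) :=
  hom_order_dense_general G₁ G₂ h₁₂ h₂₁ hgap
end

section
/- For every countable partial order (Q, ≤) there exists a map F : Q → Finset ℕ such that every element of every F(q) is an odd integer greater than 1, and for all p, q ∈ Q one has p ≤ q if and only if for every a ∈ F(p) there exists b ∈ F(q) with b ∣ a. (The order (𝒫, ≤_𝒫) of finite sets of odd integers, where A ≤_𝒫 B iff every a ∈ A is divisible by some b ∈ B, is a universal partial order.) -/
/-!
Label `Q` injectively by odd primes `ρ q`. Let `upperProd ρ q` be the product of the primes `ρ s`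
over the `s ≥ q` with `ρ s ≤ ρ q`, and let `code ρ q` consist of the `upperProd ρ r` over the
`r ≤ q` with `ρ r ≤ ρ q`. If `p ≤ q` and `r ≤ p`, either `upperProd ρ r ∈ code ρ q` already, or
`ρ q < ρ r` and every factor of `upperProd ρ q` is a factor of `upperProd ρ r`. Conversely, some
`upperProd ρ r ∈ code ρ q` divides `upperProd ρ p`; then so does the prime `ρ r`, which forces
`p ≤ r ≤ q`.
-/

open Finset

theorem exists_embedding_oddPrimes (Q : Type*) [Countable Q] :
    ∃ ρ : Q ↪ ℕ, ∀ q, (ρ q).Prime ∧ Odd (ρ q) := by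
  obtain ⟨e, he⟩ := exists_injective_nat Q
  have hinf : {p : ℕ | p.Prime ∧ Odd p}.Infinite := by
    refine (Nat.infinite_setOfPred_prime.sdiff (Set.finite_singleton 2)).mono ?_
    rintro p ⟨hp, hp2⟩
    exact ⟨hp, hp.odd_of_ne_two hp2⟩
  exact ⟨(⟨e, he⟩ : Q ↪ ℕ).trans (hinf.natEmbedding _) |>.trans (Function.Embedding.subtype _),
    fun q => (hinf.natEmbedding _ (e q)).2⟩

namespace OddDivisibilityCode

noncomputable section

variable {Q : Type*} [Preorder Q] (ρ : Q ↪ ℕ)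

def labelAtMost (n : ℕ) : Finset Q :=
  (Iic n).preimage ρ ρ.injective.injOn

open Classical in
def truncIci (q : Q) : Finset Q := (labelAtMost ρ (ρ q)).filter (q ≤ ·)

open Classical in
def truncIic (q : Q) : Finset Q := (labelAtMost ρ (ρ q)).filter (· ≤ q)

def upperProd (q : Q) : ℕ := ∏ s ∈ truncIci ρ q, ρ s

def code (q : Q) : Finset ℕ := (truncIic ρ q).image (upperProd ρ)

variable {ρ}

theorem mem_truncIci {q s : Q} : s ∈ truncIci ρ q ↔ q ≤ s ∧ ρ s ≤ ρ q := by
  simp [truncIci, labelAtMost, and_comm]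

theorem mem_truncIic {q r : Q} : r ∈ truncIic ρ q ↔ r ≤ q ∧ ρ r ≤ ρ q := by
  simp [truncIic, labelAtMost, and_comm]

theorem self_mem_truncIic (q : Q) : q ∈ truncIic ρ q := mem_truncIic.2 ⟨le_rfl, le_rfl⟩

theorem dvd_upperProd_self (q : Q) : ρ q ∣ upperProd ρ q :=
  dvd_prod_of_mem _ (mem_truncIci.2 ⟨le_rfl, le_rfl⟩)

theorem upperProd_dvd_upperProd {q r : Q} (hrq : r ≤ q) (hρ : ρ q ≤ ρ r) :
    upperProd ρ q ∣ upperProd ρ r := by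
  refine prod_dvd_prod_of_subset _ _ _ fun s hs => ?_
  obtain ⟨hqs, hsq⟩ := mem_truncIci.1 hs
  exact mem_truncIci.2 ⟨hrq.trans hqs, hsq.trans hρ⟩

theorem le_of_dvd_upperProd (hprime : ∀ q, (ρ q).Prime) {q r : Q}
    (h : ρ r ∣ upperProd ρ q) : q ≤ r := by
  obtain ⟨s, hs, hrs⟩ := ((hprime r).prime.dvd_finsetProd_iff _).1 h
  obtain rfl : r = s := ρ.injective <| (Nat.prime_dvd_prime_iff_eq (hprime r) (hprime s)).1 hrs
  exact (mem_truncIci.1 hs).1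

theorem odd_upperProd (hodd : ∀ q, Odd (ρ q)) (q : Q) : Odd (upperProd ρ q) :=
  prod_induction _ Odd (fun _ _ => Odd.mul) odd_one fun s _ => hodd s

theorem one_lt_upperProd (hρ : ∀ q, 1 < ρ q) (q : Q) : 1 < upperProd ρ q :=
  (hρ q).trans_le <| Nat.le_of_dvd (prod_pos fun s _ => zero_lt_one.trans (hρ s))
    (dvd_upperProd_self q)

theorem le_iff_forall_exists_dvd (hprime : ∀ q, (ρ q).Prime) (p q : Q) :
    p ≤ q ↔ ∀ a ∈ code ρ p, ∃ b ∈ code ρ q, b ∣ a := by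
  simp only [code, forall_mem_image, exists_mem_image]
  constructor
  · intro hpq r hr
    obtain ⟨hrp, hρr⟩ := mem_truncIic.1 hr
    by_cases hρrq : ρ r ≤ ρ q
    · exact ⟨r, mem_truncIic.2 ⟨hrp.trans hpq, hρrq⟩, dvd_rfl⟩
    · exact ⟨q, self_mem_truncIic q,
        upperProd_dvd_upperProd (hrp.trans hpq) (le_of_not_ge hρrq)⟩
  · intro h
    obtain ⟨r, hr, hdvd⟩ := h (self_mem_truncIic p)
    exact (le_of_dvd_upperProd hprime ((dvd_upperProd_self r).trans hdvd)).trans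
      (mem_truncIic.1 hr).1

end

end OddDivisibilityCode

open OddDivisibilityCode in
/-- The order 𝒫 of finite sets of odd integers > 1, with A ≤ B iff every
element of A is divisible by some element of B, is a universal partial
order for countable partial orders. -/
theorem odd_divisibility_sets_universal (Q : Type*) [Countable Q] [PartialOrder Q] :
    ∃ F : Q → Finset ℕ,
      (∀ q : Q, ∀ a ∈ F q, Odd a ∧ 1 < a) ∧
      (∀ p q : Q, p ≤ q ↔ ∀ a ∈ F p, ∃ b ∈ F q, b ∣ a) := by
  obtain ⟨ρ, hρ⟩ := exists_embedding_oddPrimes Q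
  refine ⟨code ρ, ?_, le_iff_forall_exists_dvd fun q => (hρ q).1⟩
  intro q a ha
  obtain ⟨r, -, rfl⟩ := mem_image.1 ha
  exact ⟨odd_upperProd (fun q => (hρ q).2) r, one_lt_upperProd (fun q => (hρ q).1.one_lt) r⟩
end

section
/- Let (Q, ≤) be a countable partial order in which every down-set x↓ = {y : y ≤ x} is finite (Q is past-finite). Then there exists an injective map Φ : Q → Finset ℕ such that for all x, y ∈ Q one has x ≤ y if and only if Φ(x) ⊆ Φ(y). (The order of finite subsets of a countably infinite set under inclusion is past-finite-universal.) -/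
noncomputable def OrderEmbedding.finsetIic {Q α : Type*} [PartialOrder Q] (f : Q ↪ α)
    (hpf : ∀ x : Q, (Set.Iic x).Finite) : Q ↪o Finset α :=
  OrderEmbedding.ofMapLEIff (fun x => (hpf x).toFinset.map f) fun x y => by
    rw [Finset.map_subset_map, Set.Finite.toFinset_subset_toFinset, Set.Iic_subset_Iic]

/-- The order of finite subsets of ℕ under inclusion is past-finite-universal:
every countable partial order with all down-sets finite embeds into it. -/
theorem finset_order_past_finite_universal (Q : Type*) [Countable Q] [PartialOrder Q]
    (hpf : ∀ x : Q, {y : Q | y ≤ x}.Finite) :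
    ∃ Φ : Q → Finset ℕ, Function.Injective Φ ∧
      ∀ x y : Q, x ≤ y ↔ Φ x ⊆ Φ y := by
  obtain ⟨f, hf⟩ := Countable.exists_injective_nat Q
  let Φ := OrderEmbedding.finsetIic ⟨f, hf⟩ hpf
  exact ⟨Φ, Φ.injective, fun x y => Φ.le_iff_le.symm⟩
end

section
/- Let (Q, ≤) be a countable partial order in which every up-set x↑ = {y : y ≥ x} is finite (Q is future-finite). Then there exists an injective map Φ : Q → ℕ such that Φ(x) is odd and Φ(x) ≥ 3 for every x ∈ Q, and for all x, y ∈ Q one has x ≤ y if and only if Φ(y) divides Φ(x). (The divisibility order on odd integers ≥ 3, with n ≤_d m iff m ∣ n, is future-finite-universal.) -/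
/-!
Label every element `z` of `Q` by its own odd prime `p z` and send `x` to the product of the
labels of its (finite) up-set `x↑`. Going up shrinks the up-set, so `x ≤ y` gives
`Φ y ∣ Φ x`; conversely, if `Φ y ∣ Φ x` then the prime `p y` divides `Φ x`, hence equals some
`p z` with `x ≤ z`, and injectivity of the labelling forces `z = y`.
-/

open Finset Function

theorem exists_injective_prime_three_le (α : Type*) [Countable α] :
    ∃ p : α → ℕ, Injective p ∧ ∀ a, (p a).Prime ∧ 3 ≤ p a := by
  obtain ⟨f, hf⟩ := exists_injective_nat α
  refine ⟨fun a => Nat.nth Nat.Prime (f a + 1), ?_, fun a => ⟨Nat.prime_nth_prime _, ?_⟩⟩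
  · exact (Nat.nth_injective Nat.infinite_setOfPred_prime).comp ((add_left_injective 1).comp hf)
  · rw [← Nat.nth_prime_one_eq_three]
    exact Nat.nth_monotone Nat.infinite_setOfPred_prime (Nat.le_add_left 1 (f a))

theorem Nat.prime_dvd_prod_iff_mem {ι : Type*} {p : ι → ℕ} (hp : ∀ i, (p i).Prime)
    (hinj : Injective p) {s : Finset ι} {i : ι} : p i ∣ ∏ j ∈ s, p j ↔ i ∈ s := by
  refine ⟨fun h => ?_, fun hi => dvd_prod_of_mem p hi⟩
  obtain ⟨j, hj, hij⟩ := (hp i).prime.exists_mem_finset_dvd h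
  rwa [hinj ((Nat.prime_dvd_prime_iff_eq (hp i) (hp j)).1 hij)]

section UpperProduct

variable {α : Type*} [PartialOrder α] [LocallyFiniteOrderTop α] {p : α → ℕ}

theorem prod_Ici_dvd_prod_Ici_iff (hp : ∀ a, (p a).Prime) (hinj : Injective p) {x y : α} :
    ∏ z ∈ Ici y, p z ∣ ∏ z ∈ Ici x, p z ↔ x ≤ y := by
  refine ⟨fun h => ?_, fun h => prod_dvd_prod_of_subset _ _ p (Ici_subset_Ici.2 h)⟩
  have hy : p y ∣ ∏ z ∈ Ici x, p z := (dvd_prod_of_mem p (mem_Ici.2 le_rfl)).trans h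
  simpa using (Nat.prime_dvd_prod_iff_mem hp hinj).1 hy

theorem odd_prod_Ici (hp : ∀ a, Odd (p a)) (x : α) : Odd (∏ z ∈ Ici x, p z) :=
  prod_induction p Odd (fun _ _ => Odd.mul) odd_one fun z _ => hp z

theorem le_prod_Ici (hp : ∀ a, 0 < p a) (x : α) : p x ≤ ∏ z ∈ Ici x, p z :=
  Nat.le_of_dvd (prod_pos fun z _ => hp z) (dvd_prod_of_mem p (mem_Ici.2 le_rfl))

end UpperProduct

/-- The divisibility order on odd integers ≥ 3 (with n ≤_d m iff m ∣ n) is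
future-finite-universal: every countable partial order with all up-sets
finite embeds into it. -/
theorem odd_divisibility_future_finite_universal (Q : Type*) [Countable Q] [PartialOrder Q]
    (hff : ∀ x : Q, {y : Q | x ≤ y}.Finite) :
    ∃ Φ : Q → ℕ, Function.Injective Φ ∧
      (∀ x : Q, Odd (Φ x) ∧ 3 ≤ Φ x) ∧
      (∀ x y : Q, x ≤ y ↔ Φ y ∣ Φ x) := by
  classical
  let : LocallyFiniteOrderTop Q :=
    .ofIci' Q (fun x => (hff x).toFinset) fun _ _ => Set.Finite.mem_toFinset _
  obtain ⟨p, hinj, hp⟩ := exists_injective_prime_three_le Q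
  have hprime a := (hp a).1
  have hodd a : Odd (p a) := (hp a).1.odd_of_ne_two (by have := (hp a).2; omega)
  have hle x y : x ≤ y ↔ ∏ z ∈ Ici y, p z ∣ ∏ z ∈ Ici x, p z :=
    (prod_Ici_dvd_prod_Ici_iff hprime hinj).symm
  refine ⟨fun x => ∏ z ∈ Ici x, p z, fun x y h => ?_, fun x => ⟨?_, ?_⟩, hle⟩
  · exact le_antisymm ((hle x y).2 h.symm.dvd) ((hle y x).2 h.dvd)
  · exact odd_prod_Ici hodd x
  · exact (hp x).2.trans (le_prod_Ici (fun a => (hprime a).pos) x)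
end

section
/- Let (Q, ≤_Q) be a countable partial order and let e : Q → ℕ be an injection. Define x ≤_f y iff x ≤_Q y and e(x) ≤ e(y), and x ≤_b y iff x ≤_Q y and e(y) ≤ e(x). Then: (1) ≤_f and ≤_b are partial orders on Q; (2) for every x ∈ Q the set {y : y ≤_f x} is finite and the set {y : x ≤_b y} is finite; (3) for all x, y ∈ Q one has x ≤_Q y if and only if there exists w ∈ Q with x ≤_b w and w ≤_f y. (Every countable partial order decomposes into a past-finite forwarding order and a future-finite backwarding order.) -/
/-! Both relations are intersections of `≤_Q` with a preorder pulled back along `e`, hence partial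
orders; their down-sets resp. up-sets lie in `{y | e y ≤ e x}`, which is finite because `e` is an
injection into `ℕ`. For `x ≤_Q y`, the middle point is whichever of `x`, `y` has the smaller
label. -/

section

variable {α β : Type*} [PartialOrder α]

theorem isPartialOrder_le_and_comap [Preorder β] (f : α → β) :
    IsPartialOrder α (fun x y => x ≤ y ∧ f x ≤ f y) where
  refl _ := ⟨le_rfl, le_rfl⟩
  trans _ _ _ hab hbc := ⟨hab.1.trans hbc.1, hab.2.trans hbc.2⟩
  antisymm _ _ hab hba := le_antisymm hab.1 hba.1

theorem le_iff_exists_le_comap_ge_and_le_comap_le [LinearOrder β] (f : α → β) (x y : α) :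
    x ≤ y ↔ ∃ w, (x ≤ w ∧ f w ≤ f x) ∧ (w ≤ y ∧ f w ≤ f y) := by
  refine ⟨fun hxy => ?_, fun ⟨_, hxw, hwy⟩ => hxw.1.trans hwy.1⟩
  rcases le_total (f x) (f y) with hfxy | hfyx
  · exact ⟨x, ⟨le_rfl, le_rfl⟩, hxy, hfxy⟩
  · exact ⟨y, ⟨hxy, hfyx⟩, le_rfl, le_rfl⟩

end

theorem Function.Injective.finite_setOf_le {Q β : Type*} [Preorder β] [LocallyFiniteOrderBot β]
    {f : Q → β} (hf : Function.Injective f) (b : β) : {y | f y ≤ b}.Finite :=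
  (Set.finite_Iic b).preimage hf.injOn

theorem forwarding_backwarding_decomposition_general (Q : Type*) [PartialOrder Q]
    (e : Q → ℕ) (he : Function.Injective e) :
    IsPartialOrder Q (fun x y => x ≤ y ∧ e x ≤ e y) ∧
    IsPartialOrder Q (fun x y => x ≤ y ∧ e y ≤ e x) ∧
    (∀ x : Q, {y : Q | y ≤ x ∧ e y ≤ e x}.Finite) ∧
    (∀ x : Q, {y : Q | x ≤ y ∧ e y ≤ e x}.Finite) ∧
    (∀ x y : Q, x ≤ y ↔ ∃ w : Q, (x ≤ w ∧ e w ≤ e x) ∧ (w ≤ y ∧ e w ≤ e y)) :=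
  ⟨isPartialOrder_le_and_comap e,
    isPartialOrder_le_and_comap (OrderDual.toDual ∘ e),
    fun x => (he.finite_setOf_le (e x)).subset fun _ hy => hy.2,
    fun x => (he.finite_setOf_le (e x)).subset fun _ hy => hy.2,
    le_iff_exists_le_comap_ge_and_le_comap_le e⟩

/-- Every countable partial order decomposes into a past-finite forwarding
order `≤_f` and a future-finite backwarding order `≤_b`. -/
theorem forwarding_backwarding_decomposition (Q : Type*) [Countable Q] [PartialOrder Q]
    (e : Q → ℕ) (he : Function.Injective e) :
    IsPartialOrder Q (fun x y => x ≤ y ∧ e x ≤ e y) ∧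
    IsPartialOrder Q (fun x y => x ≤ y ∧ e y ≤ e x) ∧
    (∀ x : Q, {y : Q | y ≤ x ∧ e y ≤ e x}.Finite) ∧
    (∀ x : Q, {y : Q | x ≤ y ∧ e y ≤ e x}.Finite) ∧
    (∀ x y : Q, x ≤ y ↔ ∃ w : Q, (x ≤ w ∧ e w ≤ e x) ∧ (w ≤ y ∧ e w ≤ e y)) :=
  forwarding_backwarding_decomposition_general Q e he
end

section
/- For every countable partial order (P, ≤) there exists a family (A_p)_{p ∈ P} of finite sets of odd integers ≥ 3 such that for all p, q ∈ P one has p ≤ q if and only if there exists an arc-preserving map from the disjoint union of directed cycles Σ_{r ∈ A_p} C⃗_r to Σ_{s ∈ A_q} C⃗_s. (The homomorphism order of disjoint unions of directed odd cycles is universal.) -/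
/-!
A homomorphism `Σ_{a ∈ A} C⃗_a → Σ_{b ∈ B} C⃗_b` exists iff every `a ∈ A` is divisible by some
`b ∈ B`: each cycle winds around a single target cycle. So it suffices to embed `P` into finite
sets of odd numbers under this divisibility order, in which union is an upper bound and
products of members form a lower bound.

Enumerate `P` injectively by `e` and attach the odd prime `π (e r)` to each `r`. Recursively,
`ψ p = ⋃_{r ≤ p, e r ≤ e p} π (e r) · ∏_{r ≤ q, e q < e r} ψ q`.
If `p ≤ q`, each member of `ψ p` either is a member of `ψ q` (when `e r ≤ e q`) or is a multiple
of one (when `e q < e r`). Conversely, every member of `ψ q` is divisible by some `π (e r)` with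
`r ≤ q`, while `ψ p` has a member all of whose prime factors `π (e r)` satisfy `p ≤ r`.
-/

open Finset Function
open scoped Pointwise

/-- The arc relation of the disjoint union of directed cycles `Σ_{p ∈ A} C⃗_p`:
there is an arc from `(p, i)` to `(p, i+1)` for every `p ∈ A` and `i ∈ ZMod p`. -/
def cyclesRel (A : Finset ℕ) :
    (Σ p : A, ZMod (p : ℕ)) → (Σ p : A, ZMod (p : ℕ)) → Prop :=
  fun x y => ∃ (p : A) (i : ZMod (p : ℕ)), x = ⟨p, i⟩ ∧ y = ⟨p, i + 1⟩

section Cycles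

variable {A B : Finset ℕ}

theorem cyclesRel_hom_add_natCast (F : cyclesRel A →r cyclesRel B)
    (x : Σ a : A, ZMod (a : ℕ)) (n : ℕ) :
    F ⟨x.1, x.2 + n⟩ = ⟨(F x).1, (F x).2 + n⟩ := by
  induction n with
  | zero => simp
  | succ n ih =>
    obtain ⟨b, j, hn, hsucc⟩ := F.map_rel ⟨x.1, x.2 + n, rfl, rfl⟩
    rw [ih] at hn
    obtain ⟨rfl, hj⟩ := Sigma.mk.inj_iff.1 hn
    rw [← eq_of_heq hj] at hsucc
    simpa [add_assoc] using hsucc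

theorem dvd_of_cyclesRel_hom (F : cyclesRel A →r cyclesRel B) (x : Σ a : A, ZMod (a : ℕ)) :
    ((F x).1 : ℕ) ∣ x.1 := by
  have h := cyclesRel_hom_add_natCast F x x.1
  rw [ZMod.natCast_self, add_zero] at h
  have h2 := eq_of_heq (Sigma.mk.inj_iff.1 h).2
  exact (ZMod.natCast_eq_zero_iff _ _).1 (left_eq_add.1 h2)

theorem nonempty_cyclesRel_hom_iff :
    Nonempty (cyclesRel A →r cyclesRel B) ↔ ∀ a ∈ A, ∃ b ∈ B, b ∣ a := by
  constructor
  · rintro ⟨F⟩ a ha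
    exact ⟨_, (F ⟨⟨a, ha⟩, 0⟩).1.2, dvd_of_cyclesRel_hom F ⟨⟨a, ha⟩, 0⟩⟩
  · intro h
    choose f hfB hfd using h
    refine ⟨⟨fun x => ⟨⟨f x.1 x.1.2, hfB _ x.1.2⟩, ZMod.castHom (hfd _ x.1.2) _ x.2⟩, ?_⟩⟩
    rintro _ _ ⟨a, i, rfl, rfl⟩
    exact ⟨_, _, rfl, by simp only [map_add, map_one]⟩

end Cycles

noncomputable def oddPrime (k : ℕ) : ℕ := Nat.nth Nat.Prime (k + 1)

theorem oddPrime_prime (k : ℕ) : (oddPrime k).Prime :=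
  Nat.prime_nth_prime _

theorem three_le_oddPrime (k : ℕ) : 3 ≤ oddPrime k := by
  rw [← Nat.nth_prime_one_eq_three]
  exact (Nat.nth_strictMono Nat.infinite_setOfPred_prime).monotone (Nat.le_add_left 1 k)

theorem odd_oddPrime (k : ℕ) : Odd (oddPrime k) :=
  (oddPrime_prime k).odd_of_ne_two (by have := three_le_oddPrime k; omega)

theorem oddPrime_dvd_oddPrime_iff {k l : ℕ} : oddPrime k ∣ oddPrime l ↔ k = l := by
  rw [Nat.prime_dvd_prime_iff_eq (oddPrime_prime k) (oddPrime_prime l)]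
  exact ⟨fun h => Nat.succ_injective
    ((Nat.nth_strictMono Nat.infinite_setOfPred_prime).injective h), congrArg _⟩

section Construction

variable {P : Type*} [Preorder P] {e : P → ℕ} (he : Injective e)

open scoped Classical in
noncomputable def lowerCone (p : P) : Finset P :=
  {r ∈ (range (e p + 1)).preimage e he.injOn | r ≤ p}

open scoped Classical in
noncomputable def upperCone (r : P) : Finset P :=
  {q ∈ (range (e r)).preimage e he.injOn | r ≤ q}

variable {he}

theorem mem_lowerCone {p r : P} : r ∈ lowerCone he p ↔ r ≤ p ∧ e r ≤ e p := by
  simp [lowerCone, and_comm]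

theorem mem_upperCone {q r : P} : q ∈ upperCone he r ↔ r ≤ q ∧ e q < e r := by
  simp [upperCone, and_comm]

variable (he)

noncomputable def cycleLengths (p : P) : Finset ℕ :=
  (lowerCone he p).attach.biUnion fun r =>
    {oddPrime (e r)} * ∏ q ∈ (upperCone he r).attach, cycleLengths q
termination_by e p
decreasing_by exact (mem_upperCone.1 q.2).2.trans_le (mem_lowerCone.1 r.2).2

variable {he}

theorem mem_cycleLengths {p : P} {a : ℕ} :
    a ∈ cycleLengths he p ↔ ∃ r ∈ lowerCone he p, ∃ c : P → ℕ,
      (∀ q ∈ upperCone he r, c q ∈ cycleLengths he q) ∧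
        oddPrime (e r) * ∏ q ∈ upperCone he r, c q = a := by
  rw [cycleLengths]
  simp only [mem_biUnion, mem_attach, true_and, Subtype.exists, prod_attach, mem_mul,
    mem_singleton, ← mem_coe (s := ∏ _ ∈ _, _), coe_prod, Set.mem_finsetProd]
  constructor
  · rintro ⟨r, hr, _, rfl, _, ⟨c, hc, rfl⟩, rfl⟩
    exact ⟨r, hr, c, fun q hq => hc hq, rfl⟩
  · rintro ⟨r, hr, c, hc, rfl⟩
    exact ⟨r, hr, _, rfl, _, ⟨c, fun hq => hc _ hq, rfl⟩, rfl⟩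

theorem exists_le_oddPrime_dvd_of_mem_cycleLengths {p : P} {a : ℕ}
    (ha : a ∈ cycleLengths he p) : ∃ r ≤ p, oddPrime (e r) ∣ a := by
  obtain ⟨r, hr, c, -, rfl⟩ := mem_cycleLengths.1 ha
  exact ⟨r, (mem_lowerCone.1 hr).1, dvd_mul_right _ _⟩

theorem odd_of_mem_cycleLengths {p : P} {a : ℕ} (ha : a ∈ cycleLengths he p) : Odd a := by
  induction hn : e p using Nat.strong_induction_on generalizing p a with
  | _ n ih =>
    obtain ⟨r, hr, c, hc, rfl⟩ := mem_cycleLengths.1 ha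
    refine (odd_oddPrime _).mul (prod_induction _ Odd (fun _ _ => Odd.mul) odd_one fun q hq => ?_)
    exact ih _ (hn ▸ (mem_upperCone.1 hq).2.trans_le (mem_lowerCone.1 hr).2) (hc q hq) rfl

theorem three_le_of_mem_cycleLengths {p : P} {a : ℕ} (ha : a ∈ cycleLengths he p) : 3 ≤ a := by
  obtain ⟨r, -, hra⟩ := exists_le_oddPrime_dvd_of_mem_cycleLengths ha
  exact (three_le_oddPrime _).trans (Nat.le_of_dvd (odd_of_mem_cycleLengths ha).pos hra)

theorem exists_mem_cycleLengths_forall_oddPrime_dvd_le (p : P) :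
    ∃ a ∈ cycleLengths he p, ∀ r, oddPrime (e r) ∣ a → p ≤ r := by
  induction hn : e p using Nat.strong_induction_on generalizing p with
  | _ n ih =>
    choose! c hc hcle using fun q (hq : q ∈ upperCone he p) =>
      ih (e q) (hn ▸ (mem_upperCone.1 hq).2) q rfl
    refine ⟨oddPrime (e p) * ∏ q ∈ upperCone he p, c q,
      mem_cycleLengths.2 ⟨p, mem_lowerCone.2 ⟨le_rfl, le_rfl⟩, c, hc, rfl⟩, fun r hr => ?_⟩
    rcases (oddPrime_prime (e r)).prime.dvd_or_dvd hr with hrp | hrc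
    · exact (he (oddPrime_dvd_oddPrime_iff.1 hrp)).ge
    · obtain ⟨q, hq, hrq⟩ := (oddPrime_prime (e r)).prime.exists_mem_finset_dvd hrc
      exact (mem_upperCone.1 hq).1.trans (hcle q hq r hrq)

theorem cycleLengths_dvd_covered_of_le {p q : P} (hpq : p ≤ q) :
    ∀ a ∈ cycleLengths he p, ∃ b ∈ cycleLengths he q, b ∣ a := by
  intro a ha
  obtain ⟨r, hr, c, hc, rfl⟩ := mem_cycleLengths.1 ha
  have hrq := (mem_lowerCone.1 hr).1.trans hpq
  by_cases hle : e r ≤ e q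
  · exact ⟨_, mem_cycleLengths.2 ⟨r, mem_lowerCone.2 ⟨hrq, hle⟩, c, hc, rfl⟩, dvd_rfl⟩
  · have hq : q ∈ upperCone he r := mem_upperCone.2 ⟨hrq, not_le.1 hle⟩
    exact ⟨c q, hc q hq, (dvd_prod_of_mem c hq).mul_left _⟩

theorem le_of_cycleLengths_dvd_covered {p q : P}
    (h : ∀ a ∈ cycleLengths he p, ∃ b ∈ cycleLengths he q, b ∣ a) : p ≤ q := by
  obtain ⟨a, ha, hale⟩ := exists_mem_cycleLengths_forall_oddPrime_dvd_le (he := he) p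
  obtain ⟨b, hb, hba⟩ := h a ha
  obtain ⟨r, hrq, hrb⟩ := exists_le_oddPrime_dvd_of_mem_cycleLengths hb
  exact (hale r (hrb.trans hba)).trans hrq

end Construction

/-- The homomorphism order of disjoint unions of directed odd cycles is
universal: every countable partial order embeds into it. -/
theorem disjoint_odd_cycles_universal (P : Type*) [Countable P] [PartialOrder P] :
    ∃ A : P → Finset ℕ,
      (∀ p : P, ∀ a ∈ A p, Odd a ∧ 3 ≤ a) ∧
      (∀ p q : P, p ≤ q ↔ Nonempty (cyclesRel (A p) →r cyclesRel (A q))) := by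
  obtain ⟨e, he⟩ := (countable_iff_exists_injective P).1 ‹_›
  refine ⟨cycleLengths he, fun p a ha =>
    ⟨odd_of_mem_cycleLengths ha, three_le_of_mem_cycleLengths ha⟩, fun p q => ?_⟩
  rw [nonempty_cyclesRel_hom_iff]
  exact ⟨cycleLengths_dvd_covered_of_le, le_of_cycleLengths_dvd_covered⟩
end

section
/- For every countable partial order (P, ≤) there exists a family (D_p)_{p ∈ P} of finite directed graphs (finite types equipped with a binary relation) such that for all p, q ∈ P one has p ≤ q if and only if there exists a relation-preserving map (RelHom) from D_p to D_q. (The homomorphism order of finite directed graphs is universal.) -/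
/-!
Encode `P` injectively into `ℕ` by `e`. To each `r : P` attach the squarefree number `L r`,
the product of distinct primes indexed by the codes `≤ e r` and, separately, by the codes `≤ e r`
of elements above `r`; then `L r' ∣ L r` iff `e r' ≤ e r` and `r ≤ r'`. The digraph of `p` is
the disjoint union of directed cycles of the lengths `L r`, for `r ≤ p` with `e r ≤ e p`.
A union of directed cycles maps to another one iff each of its cycle lengths is divisible by a
cycle length of the other, and the resulting condition on `p` and `q` is equivalent to `p ≤ q`:
for `r ≤ p ≤ q` take `r' = r` if `e r ≤ e q`, and `r' = q` otherwise.
-/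

open Function Finset

namespace DigraphHomOrder

section Cycles

variable {ι κ : Type*} (k : ι → ℕ)

def cycleSucc (x : Σ i, ZMod (k i)) : Σ i, ZMod (k i) := ⟨x.1, x.2 + 1⟩

-- `ZMod 0 = ℤ`, so a length `0` gives a two-way infinite path.
def cycleUnion (x y : Σ i, ZMod (k i)) : Prop := y = cycleSucc k x

theorem cycleSucc_iterate (n : ℕ) (i : ι) (v : ZMod (k i)) :
    (cycleSucc k)^[n] ⟨i, v⟩ = ⟨i, v + n⟩ := by
  induction n with
  | zero => simp
  | succ n ih =>
    rw [iterate_succ_apply', ih, cycleSucc]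
    push_cast
    rw [add_assoc]

theorem nonempty_relHom_cycleUnion_iff (l : κ → ℕ) :
    Nonempty (cycleUnion k →r cycleUnion l) ↔ ∀ i, ∃ j, l j ∣ k i := by
  constructor
  · rintro ⟨f⟩ i
    have hf : Semiconj f (cycleSucc k) (cycleSucc l) := fun x => f.map_rel rfl
    -- going once around the cycle of `i` must close up in the image
    have hcycle := hf.iterate_right (k i) ⟨i, 0⟩
    rcases hf0 : f ⟨i, 0⟩ with ⟨j, y⟩
    rw [cycleSucc_iterate, zero_add, ZMod.natCast_self, hf0, cycleSucc_iterate] at hcycle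
    have hy : y = y + k i := eq_of_heq (Sigma.mk.inj_iff.mp hcycle).2
    exact ⟨j, (ZMod.natCast_eq_zero_iff _ _).mp (left_eq_add.mp hy)⟩
  · intro h
    choose g hg using h
    refine ⟨⟨fun x => ⟨g x.1, ZMod.castHom (hg x.1) _ x.2⟩, ?_⟩⟩
    rintro ⟨i, v⟩ _ rfl
    exact congrArg (Sigma.mk (g i)) ((map_add _ v 1).trans (congrArg _ (map_one _)))

end Cycles

theorem prod_dvd_prod_iff_subset {α : Type*} {π : α → ℕ} (hπ : ∀ a, (π a).Prime)
    (hinj : Injective π) {s t : Finset α} : ∏ a ∈ s, π a ∣ ∏ a ∈ t, π a ↔ s ⊆ t := by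
  refine ⟨fun h a ha => ?_, prod_dvd_prod_of_subset _ _ π⟩
  obtain ⟨b, hb, hab⟩ := ((hπ a).prime.dvd_finsetProd_iff π).mp ((dvd_prod_of_mem π ha).trans h)
  rwa [hinj ((Nat.prime_dvd_prime_iff_eq (hπ a) (hπ b)).mp hab)]

section Encoding

variable {P : Type*} [PartialOrder P] (e : P → ℕ)

def truncIic (p : P) : Set P := {r | r ≤ p ∧ e r ≤ e p}

open Classical in
noncomputable def upperCodes (r : P) : Finset ℕ := {t ∈ Iic (e r) | ∃ s, r ≤ s ∧ e s = t}

noncomputable def profile (r : P) : Finset (ℕ ⊕ ℕ) := (Iic (e r)).disjSum (upperCodes e r)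

noncomputable def cycleLength (r : P) : ℕ :=
  ∏ a ∈ profile e r, Nat.nth Nat.Prime (Equiv.natSumNatEquivNat a)

noncomputable def homDigraph (p : P) :
    (Σ r : truncIic e p, ZMod (cycleLength e r)) → (Σ r : truncIic e p, ZMod (cycleLength e r)) →
      Prop :=
  cycleUnion fun r : truncIic e p => cycleLength e r

theorem le_iff_forall_mem_truncIic_exists {p q : P} :
    p ≤ q ↔ ∀ r ∈ truncIic e p, ∃ r' ∈ truncIic e q, e r' ≤ e r ∧ r ≤ r' := by
  constructor
  · rintro hpq r ⟨hrp, -⟩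
    by_cases hrq : e r ≤ e q
    · exact ⟨r, ⟨hrp.trans hpq, hrq⟩, le_rfl, le_rfl⟩
    · exact ⟨q, ⟨le_rfl, le_rfl⟩, (not_le.mp hrq).le, hrp.trans hpq⟩
  · intro h
    obtain ⟨r', ⟨hr'q, -⟩, -, hpr'⟩ := h p ⟨le_rfl, le_rfl⟩
    exact hpr'.trans hr'q

variable {e}

theorem finite_truncIic (he : Injective e) (p : P) : (truncIic e p).Finite :=
  ((Set.finite_Iic (e p)).preimage he.injOn).subset fun _ hr => hr.2

theorem upperCodes_subset_upperCodes_iff (he : Injective e) {r r' : P} (h : e r' ≤ e r) :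
    upperCodes e r' ⊆ upperCodes e r ↔ r ≤ r' := by
  simp only [upperCodes, subset_iff, mem_filter, mem_Iic]
  constructor
  · intro hsub
    obtain ⟨-, s, hrs, hs⟩ := hsub ⟨le_rfl, r', le_rfl, rfl⟩
    exact he hs ▸ hrs
  · rintro hrr' t ⟨ht, s, hr's, rfl⟩
    exact ⟨ht.trans h, s, hrr'.trans hr's, rfl⟩

theorem profile_subset_profile_iff (he : Injective e) {r r' : P} :
    profile e r' ⊆ profile e r ↔ e r' ≤ e r ∧ r ≤ r' := by
  simp only [profile, disjSum_subset, toLeft_disjSum, toRight_disjSum, Iic_subset_Iic]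
  exact and_congr_right (upperCodes_subset_upperCodes_iff he)

theorem cycleLength_dvd_cycleLength_iff (he : Injective e) {r r' : P} :
    cycleLength e r' ∣ cycleLength e r ↔ e r' ≤ e r ∧ r ≤ r' := by
  rw [cycleLength, cycleLength, prod_dvd_prod_iff_subset (fun _ => Nat.prime_nth_prime _)
    ((Nat.nth_injective Nat.infinite_setOfPred_prime).comp Equiv.natSumNatEquivNat.injective),
    profile_subset_profile_iff he]

instance (r : P) : NeZero (cycleLength e r) :=
  ⟨(prod_pos fun _ _ => (Nat.prime_nth_prime _).pos).ne'⟩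

theorem nonempty_relHom_homDigraph_iff (he : Injective e) {p q : P} :
    Nonempty (homDigraph e p →r homDigraph e q) ↔ p ≤ q := by
  rw [homDigraph, homDigraph, nonempty_relHom_cycleUnion_iff,
    le_iff_forall_mem_truncIic_exists e]
  simp only [Subtype.forall, Subtype.exists, cycleLength_dvd_cycleLength_iff he, exists_prop]

end Encoding

end DigraphHomOrder

open DigraphHomOrder

/-- The homomorphism order of finite directed graphs is universal: every
countable partial order embeds into it. -/
theorem digraph_hom_order_universal (P : Type*) [Countable P] [PartialOrder P] :
    ∃ (V : P → Type) (_ : ∀ p, Fintype (V p)) (E : ∀ p, V p → V p → Prop),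
      ∀ p q : P, p ≤ q ↔ Nonempty (E p →r E q) := by
  -- the vertex types must lie in `Type`, so index them by a copy of `P` in `Type`
  let φ : P ≃o Shrink.{0} P := orderIsoShrink.{0} P
  have : Countable (Shrink.{0} P) := Countable.of_equiv P φ.toEquiv
  obtain ⟨e, he⟩ := Countable.exists_injective_nat (Shrink.{0} P)
  refine ⟨fun p => Σ r : truncIic e (φ p), ZMod (cycleLength e r), fun p => ?_,
    fun p => homDigraph e (φ p), fun p q => ?_⟩
  · have := (finite_truncIic he (φ p)).to_subtype
    exact Fintype.ofFinite _
  · rw [nonempty_relHom_homDigraph_iff he, φ.le_iff_le]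
end
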